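/- (Sensitivities of reactive power injections to admittance parameters.) Fix a node k ∈ Fin n. For a branch e = (i, j) ∈ ℰ, the partial derivative of the reactive power injection q_k(g, b) with respect to the branch conductance g_e (all other parameters held fixed) equals −v_i v_j sin(δ_i − δ_j) if k = i, equals v_i v_j sin(δ_i − δ_j) if k = j, and equals 0 if k ∉ {i, j}; the partial derivative of q_k with respect to the branch susceptance b_e equals −(v_i² − v_i v_j cos(δ_i − δ_j)) if k = i, equals −(v_j² − v_i v_j cos(δ_i − δ_j)) if k = j, and equals 0 if k ∉ {i, j}. For a shunt element at node l, the partial derivative of q_k with respect to the shunt susceptance b_l equals −v_k² if k = l and 0 otherwise, and the partial derivative of q_k with respect to the shunt conductance g_l equals 0. -/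

import Mathlib

open Matrix

/-- The branches of the complete graph on `n` nodes: ordered pairs `(i, j)` with `i < j`. -/
abbrev Branch (n : ℕ) := {p : Fin n × Fin n // p.1 < p.2}

/-- The complete-graph incidence matrix with self-loops `𝒜ₙ`. -/
def completeIncidence (n : ℕ) : Matrix (Branch n ⊕ Fin n) (Fin n) ℂ :=
  Matrix.of fun r c =>
    match r with
    | Sum.inl e => if c = e.val.1 then 1 else if c = e.val.2 then -1 else 0
    | Sum.inr k => if c = k then 1 else 0

/-- `F(x) = diag (conj x) ⬝ 𝒜ₙᵀ ⬝ diag (𝒜ₙ *ᵥ x)`. -/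
noncomputable def Fmat (n : ℕ) (x : Fin n → ℂ) : Matrix (Fin n) (Branch n ⊕ Fin n) ℂ :=
  Matrix.diagonal (fun i => (starRingEnd ℂ) (x i)) * (completeIncidence n)ᵀ *
    Matrix.diagonal (completeIncidence n *ᵥ x)

/-- The reactive bus power injection `q_k (g, b) = -Im ((F(x) *ᵥ (g + j b))_k)` where
`x_i = v_i exp (j δ_i)`. -/
noncomputable def reactiveInjection (n : ℕ) (v δ : Fin n → ℝ) (g b : Branch n ⊕ Fin n → ℝ)
    (k : Fin n) : ℝ :=
  -((Fmat n (fun i => (v i : ℂ) * Complex.exp (Complex.I * (δ i : ℂ))) *ᵥ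
      (fun e => (g e : ℂ) + Complex.I * (b e : ℂ))) k).im

/-! Writing `y = g + j b`, the injection `q_k = -Im (F(x) y)_k` is affine in each coordinate of
`y`, so `∂q_k/∂g_e = -Im F_{ke}` and `∂q_k/∂b_e = -Re F_{ke}`. The entry
`F_{ke} = conj (x_k) 𝒜_{ek} (𝒜 x)_e` vanishes unless node `k` is an end of `e`, and is
otherwise a signed sum of products `conj (x_i) x_j = v_i v_j e^{j (δ_j - δ_i)}`, whose real and
imaginary parts are the cosine and sine terms. -/

open Complex ComplexConjugate Function

def admittance {κ : Type*} (g b : κ → ℝ) : κ → ℂ := fun e => g e + I * b e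

section Admittance

variable {κ : Type*} [DecidableEq κ] (g b : κ → ℝ) (m : κ)

theorem admittance_update_conductance (t : ℝ) :
    admittance (update g m t) b = admittance g b + Pi.single m ((t - g m : ℝ) : ℂ) := by
  ext e
  rcases eq_or_ne e m with rfl | he
  · simp only [admittance, update_self, ofReal_sub, Pi.add_apply, Pi.single_eq_same]
    ring
  · simp [admittance, he]

theorem admittance_update_susceptance (t : ℝ) :
    admittance g (update b m t) = admittance g b + Pi.single m (I * (t - b m : ℝ)) := by
  ext e
  rcases eq_or_ne e m with rfl | he
  · simp only [admittance, update_self, ofReal_sub, Pi.add_apply, Pi.single_eq_same]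
    ring
  · simp [admittance, he]

variable {ι : Type*} [Fintype κ] (M : Matrix ι κ ℂ)

theorem hasDerivAt_im_mulVec_admittance_update_conductance (i : ι) :
    HasDerivAt (fun t : ℝ => ((M *ᵥ admittance (update g m t) b) i).im) (M i m).im (g m) := by
  have hline : HasDerivAt (fun t : ℝ => ((M *ᵥ admittance g b) i).im + (t - g m) * (M i m).im)
      (M i m).im (g m) := by
    simpa using (((hasDerivAt_id' (g m)).sub_const (g m)).mul_const (M i m).im).const_add
      ((M *ᵥ admittance g b) i).im
  refine hline.congr_of_eventuallyEq (.of_forall fun t => ?_)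
  simp [admittance_update_conductance, mulVec_add, mul_comm]

theorem hasDerivAt_im_mulVec_admittance_update_susceptance (i : ι) :
    HasDerivAt (fun t : ℝ => ((M *ᵥ admittance g (update b m t)) i).im) (M i m).re (b m) := by
  have hline : HasDerivAt (fun t : ℝ => ((M *ᵥ admittance g b) i).im + (t - b m) * (M i m).re)
      (M i m).re (b m) := by
    simpa using (((hasDerivAt_id' (b m)).sub_const (b m)).mul_const (M i m).re).const_add
      ((M *ᵥ admittance g b) i).im
  refine hline.congr_of_eventuallyEq (.of_forall fun t => ?_)
  simp [admittance_update_susceptance, mulVec_add, mul_comm]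

end Admittance

noncomputable def phasor {ι : Type*} (v δ : ι → ℝ) (i : ι) : ℂ := v i * exp (I * δ i)

section Phasor

variable {ι : Type*} (v δ : ι → ℝ) (i j : ι)

theorem conj_phasor_mul_phasor :
    conj (phasor v δ i) * phasor v δ j = v i * v j * exp (((δ j - δ i : ℝ) : ℂ) * I) := by
  simp only [phasor, map_mul, conj_ofReal, ← Complex.exp_conj, conj_I]
  rw [mul_mul_mul_comm, ← exp_add]
  push_cast
  ring_nf

theorem re_conj_phasor_mul_phasor :
    (conj (phasor v δ i) * phasor v δ j).re = v i * v j * Real.cos (δ i - δ j) := by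
  rw [conj_phasor_mul_phasor, ← ofReal_mul, re_ofReal_mul, exp_ofReal_mul_I_re, ← Real.cos_neg,
    neg_sub]

theorem im_conj_phasor_mul_phasor :
    (conj (phasor v δ i) * phasor v δ j).im = -(v i * v j * Real.sin (δ i - δ j)) := by
  rw [conj_phasor_mul_phasor, ← ofReal_mul, im_ofReal_mul, exp_ofReal_mul_I_im, ← neg_sub,
    Real.sin_neg, mul_neg]

end Phasor

section Incidence

variable {n : ℕ} (x : Fin n → ℂ) (k : Fin n)

theorem completeIncidence_mulVec_inl (e : Branch n) :
    (completeIncidence n *ᵥ x) (Sum.inl e) = x e.val.1 - x e.val.2 := by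
  have hne : e.val.2 ≠ e.val.1 := e.prop.ne'
  simp [completeIncidence, mulVec, dotProduct, ite_mul, Finset.sum_ite, Finset.filter_eq',
    Finset.filter_ne', hne, sub_eq_add_neg]

theorem completeIncidence_mulVec_inr (l : Fin n) :
    (completeIncidence n *ᵥ x) (Sum.inr l) = x l := by
  simp [completeIncidence, mulVec, dotProduct, ite_mul]

theorem Fmat_apply (r : Branch n ⊕ Fin n) :
    Fmat n x k r = conj (x k) * completeIncidence n r k * (completeIncidence n *ᵥ x) r := by
  simp [Fmat, mul_diagonal, diagonal_mul]

end Incidence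

section Sensitivity

variable {n : ℕ} (v δ : Fin n → ℝ) (k : Fin n)

theorem neg_im_Fmat_phasor_inl (e : Branch n) :
    -(Fmat n (phasor v δ) k (Sum.inl e)).im =
      if k = e.val.1 then -(v e.val.1 * v e.val.2 * Real.sin (δ e.val.1 - δ e.val.2))
      else if k = e.val.2 then v e.val.1 * v e.val.2 * Real.sin (δ e.val.1 - δ e.val.2)
      else 0 := by
  rw [Fmat_apply, completeIncidence_mulVec_inl]
  split_ifs with hi hj
  · subst hi
    simp only [completeIncidence, of_apply, ↓reduceIte, mul_one, mul_sub, sub_im,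
      im_conj_phasor_mul_phasor]
    simp
  · subst hj
    simp only [completeIncidence, of_apply, ↓reduceIte, hi, mul_neg_one, neg_mul, mul_sub, neg_im,
      sub_im, im_conj_phasor_mul_phasor, sub_self, Real.sin_zero, ← neg_sub (δ e.val.1),
      Real.sin_neg]
    ring
  · simp [completeIncidence, hi, hj]

theorem neg_re_Fmat_phasor_inl (e : Branch n) :
    -(Fmat n (phasor v δ) k (Sum.inl e)).re =
      if k = e.val.1 then
        -(v e.val.1 ^ 2 - v e.val.1 * v e.val.2 * Real.cos (δ e.val.1 - δ e.val.2))
      else if k = e.val.2 then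
        -(v e.val.2 ^ 2 - v e.val.1 * v e.val.2 * Real.cos (δ e.val.1 - δ e.val.2))
      else 0 := by
  rw [Fmat_apply, completeIncidence_mulVec_inl]
  split_ifs with hi hj
  · subst hi
    simp only [completeIncidence, of_apply, ↓reduceIte, mul_one, mul_sub, sub_re,
      re_conj_phasor_mul_phasor, sub_self, Real.cos_zero]
    ring
  · subst hj
    simp only [completeIncidence, of_apply, ↓reduceIte, hi, mul_neg_one, neg_mul, mul_sub, neg_re,
      sub_re, re_conj_phasor_mul_phasor, sub_self, Real.cos_zero, ← neg_sub (δ e.val.1),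
      Real.cos_neg]
    ring
  · simp [completeIncidence, hi, hj]

theorem neg_re_Fmat_phasor_inr (l : Fin n) :
    -(Fmat n (phasor v δ) k (Sum.inr l)).re = if k = l then -(v k ^ 2) else 0 := by
  rw [Fmat_apply, completeIncidence_mulVec_inr]
  split_ifs with hl
  · subst hl
    simp only [completeIncidence, of_apply, ↓reduceIte, mul_one, re_conj_phasor_mul_phasor,
      sub_self, Real.cos_zero]
    ring
  · simp [completeIncidence, hl]

theorem im_Fmat_phasor_inr (l : Fin n) : (Fmat n (phasor v δ) k (Sum.inr l)).im = 0 := by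
  rw [Fmat_apply, completeIncidence_mulVec_inr]
  by_cases hl : k = l
  · subst hl
    simp only [completeIncidence, of_apply, ↓reduceIte, mul_one, im_conj_phasor_mul_phasor]
    simp
  · simp [completeIncidence, hl]

end Sensitivity

/-- **Sensitivities of reactive power injections to admittance parameters.**
For a branch `e = (i, j)`, `∂q_k/∂g_e = -v_i v_j sin (δ_i - δ_j)` if `k = i`,
`v_i v_j sin (δ_i - δ_j)` if `k = j`, and `0` otherwise, while
`∂q_k/∂b_e = -(v_i² - v_i v_j cos (δ_i - δ_j))` if `k = i`,
`-(v_j² - v_i v_j cos (δ_i - δ_j))` if `k = j`, and `0` otherwise. For a shunt at node `l`,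
`∂q_k/∂b_l = -v_k²` if `k = l` and `0` otherwise, and `∂q_k/∂g_l = 0`. -/
theorem reactive_injection_admittance_sensitivities (n : ℕ) (v δ : Fin n → ℝ)
    (g b : Branch n ⊕ Fin n → ℝ) (k : Fin n) :
    (∀ e : Branch n,
      HasDerivAt (fun t : ℝ => reactiveInjection n v δ (Function.update g (Sum.inl e) t) b k)
        (if k = e.val.1 then
          -(v e.val.1 * v e.val.2 * Real.sin (δ e.val.1 - δ e.val.2))
        else if k = e.val.2 then
          v e.val.1 * v e.val.2 * Real.sin (δ e.val.1 - δ e.val.2)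
        else 0)
        (g (Sum.inl e)) ∧
      HasDerivAt (fun t : ℝ => reactiveInjection n v δ g (Function.update b (Sum.inl e) t) k)
        (if k = e.val.1 then
          -(v e.val.1 ^ 2 - v e.val.1 * v e.val.2 * Real.cos (δ e.val.1 - δ e.val.2))
        else if k = e.val.2 then
          -(v e.val.2 ^ 2 - v e.val.1 * v e.val.2 * Real.cos (δ e.val.1 - δ e.val.2))
        else 0)
        (b (Sum.inl e))) ∧
    (∀ l : Fin n,
      HasDerivAt (fun t : ℝ => reactiveInjection n v δ g (Function.update b (Sum.inr l) t) k)
        (if k = l then -(v k ^ 2) else 0) (b (Sum.inr l)) ∧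
      HasDerivAt (fun t : ℝ => reactiveInjection n v δ (Function.update g (Sum.inr l) t) b k)
        0 (g (Sum.inr l))) := by
  refine ⟨fun e => ⟨?_, ?_⟩, fun l => ⟨?_, ?_⟩⟩
  · rw [← neg_im_Fmat_phasor_inl]
    exact (hasDerivAt_im_mulVec_admittance_update_conductance g b _ _ k).neg
  · rw [← neg_re_Fmat_phasor_inl]
    exact (hasDerivAt_im_mulVec_admittance_update_susceptance g b _ _ k).neg
  · rw [← neg_re_Fmat_phasor_inr]
    exact (hasDerivAt_im_mulVec_admittance_update_susceptance g b _ _ k).neg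
  · rw [← neg_zero, ← im_Fmat_phasor_inr v δ k l]
    exact (hasDerivAt_im_mulVec_admittance_update_conductance g b _ _ k).neg
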